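/- arXiv:2306.16711 — 5 statements merged into one kernel-verified Lean document; each statement's English description precedes it below -/
import Mathlib

section
/- Let L, R : [0,∞) × ℝ → ℝ satisfy: for each fixed t, L(t,·) and R(t,·) are strictly increasing with c|x−y| ≤ |L(t,x)−L(t,y)| ≤ C|x−y| and similarly for R (0 < c < C), and α := inf over all (t,x) of (R(t,x) − L(t,x)) > 0. Given S : [0,∞) → ℝ, let Φ_t, Ψ_t be the unique solutions of L(t, S_t + Φ_t) = 0 and R(t, S_t + Ψ_t) = 0. Then inf_{t ≥ 0} (Φ_t − Ψ_t) ≥ α / C; in particular inf_{t≥0}(Φ_t − Ψ_t) > 0. -/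
theorem barrier_gap_lower_bound
    (L R : ℝ → ℝ → ℝ) (S Φ Ψ : ℝ → ℝ) (c C α : ℝ)
    (hc : 0 < c) (hcC : c < C) (hα : 0 < α)
    (hmonoL : ∀ t : ℝ, 0 ≤ t → StrictMono (L t))
    (hmonoR : ∀ t : ℝ, 0 ≤ t → StrictMono (R t))
    (hlipL : ∀ t : ℝ, 0 ≤ t → ∀ x y : ℝ,
      c * |x - y| ≤ |L t x - L t y| ∧ |L t x - L t y| ≤ C * |x - y|)
    (hlipR : ∀ t : ℝ, 0 ≤ t → ∀ x y : ℝ,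
      c * |x - y| ≤ |R t x - R t y| ∧ |R t x - R t y| ≤ C * |x - y|)
    (hgap : ∀ t : ℝ, 0 ≤ t → ∀ x : ℝ, α ≤ R t x - L t x)
    (hΦ : ∀ t : ℝ, 0 ≤ t → L t (S t + Φ t) = 0)
    (hΨ : ∀ t : ℝ, 0 ≤ t → R t (S t + Ψ t) = 0) :
    ∀ t : ℝ, 0 ≤ t → α / C ≤ Φ t - Ψ t ∧ 0 < Φ t - Ψ t := by
  intro t ht
  have hC : 0 < C := hc.trans hcC
  set x := S t + Φ t with hx
  set y := S t + Ψ t with hy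
  have hLx : L t x = 0 := hΦ t ht
  have hRy : R t y = 0 := hΨ t ht
  have hRx : α ≤ R t x := by have := hgap t ht x; linarith [hLx]
  have hxy : y < x := by
    by_contra h
    push_neg at h
    have := (hmonoR t ht).monotone h
    rw [hRy] at this
    linarith
  have hsub : Φ t - Ψ t = x - y := by simp [hx, hy]
  have hlip := (hlipR t ht x y).2
  have habs1 : |R t x - R t y| = R t x := by
    rw [hRy, sub_zero]; exact abs_of_pos (lt_of_lt_of_le hα hRx)
  have habs2 : |x - y| = x - y := abs_of_pos (by linarith)
  rw [habs1, habs2] at hlip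
  have h1 : α ≤ C * (x - y) := le_trans hRx hlip
  constructor
  · rw [hsub, div_le_iff₀ hC]; linarith [mul_comm C (x - y)]
  · rw [hsub]; nlinarith
end

section
/- Let Φ, Ψ : [0,∞) → ℝ and define for t ≥ 0: K_t = −max( min((−Φ_0)⁺, inf_{r∈[0,t]}(−Ψ_r)), sup_{s∈[0,t]} min(−Φ_s, inf_{r∈[s,t]}(−Ψ_r)) ). Then for any 0 ≤ θ1 ≤ t1 ≤ t2 ≤ θ2, |K_{t1} − K_{t2}| ≤ sup_{s,u∈[θ1,θ2]}|Φ_s − Φ_u| + sup_{s,u∈[θ1,θ2]}|Ψ_s − Ψ_u|. In particular, if Φ and Ψ are càdlàg (right-continuous with left limits) then K is càdlàg, and if Φ, Ψ are continuous then K is continuous. -/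
open Filter

section SkorokhodAux

open Set Filter

noncomputable def nI (Ψ : ℝ → ℝ) (a b : ℝ) : ℝ := sInf ((fun r => -Ψ r) '' Set.Icc a b)

noncomputable def gg (Φ Ψ : ℝ → ℝ) (t s : ℝ) : ℝ := min (-Φ s) (nI Ψ s t)

noncomputable def MM (Φ Ψ : ℝ → ℝ) (t : ℝ) : ℝ :=
  max (min (max (-Φ 0) 0) (nI Ψ 0 t))
    (sSup ((fun s => gg Φ Ψ t s) '' Set.Icc 0 t))

lemma nI_le_max (Ψ : ℝ → ℝ) (s t : ℝ) (h : s ≤ t) : nI Ψ s t ≤ max (-Ψ t) 0 := by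
  by_cases hb : BddBelow ((fun r => -Ψ r) '' Set.Icc s t)
  · exact le_trans (csInf_le hb ⟨t, ⟨h, le_rfl⟩, rfl⟩) (le_max_left _ _)
  · unfold nI; rw [Real.sInf_of_not_bddBelow hb]; exact le_max_right _ _

lemma gg_bddAbove (Φ Ψ : ℝ → ℝ) (t : ℝ) : BddAbove ((fun s => gg Φ Ψ t s) '' Set.Icc 0 t) := by
  refine ⟨max (-Ψ t) 0, ?_⟩
  rintro x ⟨s, hs, rfl⟩
  exact le_trans (min_le_right _ _) (nI_le_max Ψ s t hs.2)

lemma osc_bound (Φ Ψ : ℝ → ℝ) (θ1 t1 t2 θ2 : ℝ) (h0 : 0 ≤ θ1) (h1 : θ1 ≤ t1)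
    (h2 : t1 ≤ t2) (h3 : t2 ≤ θ2) (bΦ bΨ : ℝ)
    (hΦ : ∀ s ∈ Set.Icc θ1 θ2, ∀ u ∈ Set.Icc θ1 θ2, |Φ s - Φ u| ≤ bΦ)
    (hΨ : ∀ s ∈ Set.Icc θ1 θ2, ∀ u ∈ Set.Icc θ1 θ2, |Ψ s - Ψ u| ≤ bΨ) :
    |MM Φ Ψ t1 - MM Φ Ψ t2| ≤ bΦ + bΨ := by
  have hθ : θ1 ≤ θ2 := by linarith
  have hθ1m : θ1 ∈ Icc θ1 θ2 := ⟨le_rfl, hθ⟩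
  have ht1m : t1 ∈ Icc θ1 θ2 := ⟨h1, by linarith⟩
  have ht2m : t2 ∈ Icc θ1 θ2 := ⟨by linarith, h3⟩
  have hbΦ : 0 ≤ bΦ := by have := hΦ θ1 hθ1m θ1 hθ1m; simpa using this
  have hbΨ : 0 ≤ bΨ := by have := hΨ θ1 hθ1m θ1 hθ1m; simpa using this
  have h0t1 : (0:ℝ) ≤ t1 := by linarith
  have h0t2 : (0:ℝ) ≤ t2 := by linarith
  -- comparison of inner infima
  have L1 : ∀ s, s ≤ t1 → nI Ψ s t2 ≤ nI Ψ s t1 ∧ nI Ψ s t1 - bΨ ≤ nI Ψ s t2 := by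
    intro s hst1
    have hsplit : Icc s t2 = Icc s t1 ∪ Icc t1 t2 := (Icc_union_Icc_eq_Icc hst1 h2).symm
    have himg : (fun r => -Ψ r) '' Icc s t2
        = ((fun r => -Ψ r) '' Icc s t1) ∪ ((fun r => -Ψ r) '' Icc t1 t2) := by
      rw [hsplit, image_union]
    have hS1ne : ((fun r => -Ψ r) '' Icc s t1).Nonempty := (nonempty_Icc.mpr hst1).image _
    have hS12ne : ((fun r => -Ψ r) '' Icc t1 t2).Nonempty := (nonempty_Icc.mpr h2).image _
    have hS12bdd : BddBelow ((fun r => -Ψ r) '' Icc t1 t2) := by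
      refine ⟨-Ψ θ1 - bΨ, ?_⟩
      rintro x ⟨r, hr, rfl⟩
      have hrm : r ∈ Icc θ1 θ2 := ⟨le_trans h1 hr.1, le_trans hr.2 h3⟩
      have := abs_le.mp (hΨ θ1 hθ1m r hrm)
      show -Ψ θ1 - bΨ ≤ -Ψ r
      linarith [this.2]
    by_cases hb : BddBelow ((fun r => -Ψ r) '' Icc s t1)
    · have hs2 : nI Ψ s t2 = min (sInf ((fun r => -Ψ r) '' Icc s t1))
          (sInf ((fun r => -Ψ r) '' Icc t1 t2)) := by
        unfold nI
        rw [himg, csInf_union hb hS1ne hS12bdd hS12ne]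
      have hle1 : sInf ((fun r => -Ψ r) '' Icc s t1) ≤ -Ψ t1 :=
        csInf_le hb ⟨t1, ⟨hst1, le_rfl⟩, rfl⟩
      have hge12 : -Ψ t1 - bΨ ≤ sInf ((fun r => -Ψ r) '' Icc t1 t2) := by
        apply le_csInf hS12ne
        rintro x ⟨r, hr, rfl⟩
        have hrm : r ∈ Icc θ1 θ2 := ⟨le_trans h1 hr.1, le_trans hr.2 h3⟩
        have := abs_le.mp (hΨ t1 ht1m r hrm)
        show -Ψ t1 - bΨ ≤ -Ψ r
        linarith [this.2]
      have e1 : nI Ψ s t1 = sInf ((fun r => -Ψ r) '' Icc s t1) := rfl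
      rw [hs2, e1]
      constructor
      · exact min_le_left _ _
      · exact le_min (by linarith) (by linarith)
    · have hb2 : ¬ BddBelow ((fun r => -Ψ r) '' Icc s t2) := by
        intro h
        exact hb (h.mono (by rw [himg]; exact subset_union_left))
      unfold nI
      rw [Real.sInf_of_not_bddBelow hb, Real.sInf_of_not_bddBelow hb2]
      constructor <;> linarith
  -- comparison of g functions
  have L3 : ∀ s ∈ Icc (0:ℝ) t1, gg Φ Ψ t2 s ≤ gg Φ Ψ t1 s ∧ gg Φ Ψ t1 s - bΨ ≤ gg Φ Ψ t2 s := by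
    intro s hs
    obtain ⟨e1, e2⟩ := L1 s hs.2
    unfold gg
    constructor
    · exact min_le_min le_rfl e1
    · refine le_min ?_ ?_
      · linarith [min_le_left (-Φ s) (nI Ψ s t1)]
      · linarith [min_le_right (-Φ s) (nI Ψ s t1)]
  -- A comparison
  obtain ⟨eA1, eA2⟩ := L1 0 h0t1
  have hA1 : min (max (-Φ 0) 0) (nI Ψ 0 t2) ≤ min (max (-Φ 0) 0) (nI Ψ 0 t1) :=
    min_le_min le_rfl eA1
  have hA2 : min (max (-Φ 0) 0) (nI Ψ 0 t1) - bΨ ≤ min (max (-Φ 0) 0) (nI Ψ 0 t2) := by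
    refine le_min ?_ ?_
    · linarith [min_le_left (max (-Φ 0) 0) (nI Ψ 0 t1)]
    · linarith [min_le_right (max (-Φ 0) 0) (nI Ψ 0 t1)]
  -- B facts
  have hne1 : ((fun s => gg Φ Ψ t1 s) '' Icc 0 t1).Nonempty := (nonempty_Icc.mpr h0t1).image _
  have hne21 : ((fun s => gg Φ Ψ t2 s) '' Icc 0 t1).Nonempty := (nonempty_Icc.mpr h0t1).image _
  have hne22 : ((fun s => gg Φ Ψ t2 s) '' Icc t1 t2).Nonempty := (nonempty_Icc.mpr h2).image _
  have hBA1 := gg_bddAbove Φ Ψ t1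
  have hBA2 := gg_bddAbove Φ Ψ t2
  have hBA21 : BddAbove ((fun s => gg Φ Ψ t2 s) '' Icc 0 t1) :=
    hBA2.mono (image_mono (Icc_subset_Icc le_rfl h2))
  have hBA22 : BddAbove ((fun s => gg Φ Ψ t2 s) '' Icc t1 t2) :=
    hBA2.mono (image_mono (Icc_subset_Icc h0t1 le_rfl))
  have hBsplit : sSup ((fun s => gg Φ Ψ t2 s) '' Icc 0 t2)
      = max (sSup ((fun s => gg Φ Ψ t2 s) '' Icc 0 t1))
          (sSup ((fun s => gg Φ Ψ t2 s) '' Icc t1 t2)) := by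
    rw [show Icc (0:ℝ) t2 = Icc 0 t1 ∪ Icc t1 t2 from (Icc_union_Icc_eq_Icc h0t1 h2).symm,
      image_union, csSup_union hBA21 hne21 hBA22 hne22]
  have hgt1t1 : gg Φ Ψ t1 t1 = min (-Φ t1) (-Ψ t1) := by
    unfold gg nI
    rw [Icc_self, image_singleton, csInf_singleton]
  -- upper estimates for B
  have hB21 : sSup ((fun s => gg Φ Ψ t2 s) '' Icc 0 t1)
      ≤ sSup ((fun s => gg Φ Ψ t1 s) '' Icc 0 t1) := by
    apply csSup_le hne21
    rintro x ⟨s, hs, rfl⟩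
    exact le_trans (L3 s hs).1 (le_csSup hBA1 ⟨s, hs, rfl⟩)
  have hgB1 : gg Φ Ψ t1 t1 ≤ sSup ((fun s => gg Φ Ψ t1 s) '' Icc 0 t1) :=
    le_csSup hBA1 ⟨t1, ⟨h0t1, le_rfl⟩, rfl⟩
  have hB22 : sSup ((fun s => gg Φ Ψ t2 s) '' Icc t1 t2)
      ≤ gg Φ Ψ t1 t1 + (bΦ + bΨ) := by
    apply csSup_le hne22
    rintro x ⟨s, hs, rfl⟩
    have hsm : s ∈ Icc θ1 θ2 := ⟨le_trans h1 hs.1, le_trans hs.2 h3⟩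
    have e1 : -Φ s ≤ -Φ t1 + bΦ := by
      have := abs_le.mp (hΦ t1 ht1m s hsm)
      linarith [this.2]
    have e2 : nI Ψ s t2 ≤ -Ψ t1 + bΨ := by
      have hbdd : BddBelow ((fun r => -Ψ r) '' Icc s t2) := by
        refine ⟨-Ψ θ1 - bΨ, ?_⟩
        rintro x ⟨r, hr, rfl⟩
        have hrm : r ∈ Icc θ1 θ2 := ⟨le_trans hsm.1 hr.1, le_trans hr.2 h3⟩
        have := abs_le.mp (hΨ θ1 hθ1m r hrm)
        show -Ψ θ1 - bΨ ≤ -Ψ r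
        linarith [this.2]
      have := csInf_le hbdd ⟨t2, ⟨hs.2, le_rfl⟩, rfl⟩
      have e3 := abs_le.mp (hΨ t1 ht1m t2 ht2m)
      have : nI Ψ s t2 ≤ -Ψ t2 := this
      linarith [e3.2]
    rw [hgt1t1]
    have hgeq : gg Φ Ψ t2 s = min (-Φ s) (nI Ψ s t2) := rfl
    rcases le_total (-Φ t1) (-Ψ t1) with h | h
    · rw [min_eq_left h]
      show min (-Φ s) (nI Ψ s t2) ≤ -Φ t1 + (bΦ + bΨ)
      have := min_le_left (-Φ s) (nI Ψ s t2)
      linarith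
    · rw [min_eq_right h]
      show min (-Φ s) (nI Ψ s t2) ≤ -Ψ t1 + (bΦ + bΨ)
      have := min_le_right (-Φ s) (nI Ψ s t2)
      linarith
  -- lower estimate for B
  have hBlow : sSup ((fun s => gg Φ Ψ t1 s) '' Icc 0 t1)
      ≤ sSup ((fun s => gg Φ Ψ t2 s) '' Icc 0 t2) + bΨ := by
    apply csSup_le hne1
    rintro x ⟨s, hs, rfl⟩
    have := (L3 s hs).2
    have h4 : gg Φ Ψ t2 s ≤ sSup ((fun s => gg Φ Ψ t2 s) '' Icc 0 t2) :=
      le_csSup hBA2 ⟨s, ⟨hs.1, le_trans hs.2 h2⟩, rfl⟩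
    linarith
  -- assemble
  unfold MM
  rw [abs_sub_le_iff]
  constructor
  · -- MM t1 - MM t2 ≤ b : i.e. M1 ≤ M2 + b
    apply sub_le_iff_le_add.mpr
    apply max_le
    · exact le_trans (by linarith [le_max_left (min (max (-Φ 0) 0) (nI Ψ 0 t2)) (sSup ((fun s => gg Φ Ψ t2 s) '' Icc 0 t2))]) le_rfl
    · have := le_max_right (min (max (-Φ 0) 0) (nI Ψ 0 t2)) (sSup ((fun s => gg Φ Ψ t2 s) '' Icc 0 t2))
      linarith
  · -- M2 - M1 ≤ b
    apply sub_le_iff_le_add.mpr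
    apply max_le
    · have := le_max_left (min (max (-Φ 0) 0) (nI Ψ 0 t1)) (sSup ((fun s => gg Φ Ψ t1 s) '' Icc 0 t1))
      linarith
    · have hmax := le_max_right (min (max (-Φ 0) 0) (nI Ψ 0 t1)) (sSup ((fun s => gg Φ Ψ t1 s) '' Icc 0 t1))
      rw [hBsplit]
      apply max_le
      · linarith
      · linarith

end SkorokhodAux

/-- Right-continuous with left limits (on `[0,∞)`). -/
def Cadlag (f : ℝ → ℝ) : Prop :=
  (∀ t : ℝ, 0 ≤ t → ContinuousWithinAt f (Set.Ici t) t) ∧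
  (∀ t : ℝ, 0 < t → ∃ l : ℝ, Tendsto f (nhdsWithin t (Set.Iio t)) (nhds l))


theorem skorokhod_map_oscillation_bound
    (Φ Ψ K : ℝ → ℝ)
    (hK : ∀ t : ℝ, 0 ≤ t → K t =
      -(max (min (max (-Φ 0) 0) (sInf ((fun r => -Ψ r) '' Set.Icc 0 t)))
        (sSup ((fun s => min (-Φ s) (sInf ((fun r => -Ψ r) '' Set.Icc s t))) ''
          Set.Icc 0 t)))) :
    (∀ θ1 t1 t2 θ2 : ℝ, 0 ≤ θ1 → θ1 ≤ t1 → t1 ≤ t2 → t2 ≤ θ2 →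
      ∀ bΦ bΨ : ℝ,
        (∀ s ∈ Set.Icc θ1 θ2, ∀ u ∈ Set.Icc θ1 θ2, |Φ s - Φ u| ≤ bΦ) →
        (∀ s ∈ Set.Icc θ1 θ2, ∀ u ∈ Set.Icc θ1 θ2, |Ψ s - Ψ u| ≤ bΨ) →
        |K t1 - K t2| ≤ bΦ + bΨ) ∧
    (Cadlag Φ → Cadlag Ψ → Cadlag K) ∧
    (ContinuousOn Φ (Set.Ici 0) → ContinuousOn Ψ (Set.Ici 0) →
      ContinuousOn K (Set.Ici 0)) := by
  have part1 : ∀ θ1 t1 t2 θ2 : ℝ, 0 ≤ θ1 → θ1 ≤ t1 → t1 ≤ t2 → t2 ≤ θ2 →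
      ∀ bΦ bΨ : ℝ,
        (∀ s ∈ Set.Icc θ1 θ2, ∀ u ∈ Set.Icc θ1 θ2, |Φ s - Φ u| ≤ bΦ) →
        (∀ s ∈ Set.Icc θ1 θ2, ∀ u ∈ Set.Icc θ1 θ2, |Ψ s - Ψ u| ≤ bΨ) →
        |K t1 - K t2| ≤ bΦ + bΨ := by
    intro θ1 t1 t2 θ2 h0 h1 h2 h3 bΦ bΨ hΦb hΨb
    have hM := osc_bound Φ Ψ θ1 t1 t2 θ2 h0 h1 h2 h3 bΦ bΨ hΦb hΨb
    rw [hK t1 (by linarith), hK t2 (by linarith)]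
    show |(-(MM Φ Ψ t1)) - (-(MM Φ Ψ t2))| ≤ bΦ + bΨ
    rw [neg_sub_neg, abs_sub_comm]
    exact hM
  refine ⟨part1, ?_, ?_⟩
  · -- Cadlag
    intro hΦc hΨc
    constructor
    · -- right continuity
      intro t ht
      rw [Metric.continuousWithinAt_iff]
      intro ε hε
      obtain ⟨δ1, hδ1, hΦδ⟩ := Metric.continuousWithinAt_iff.mp (hΦc.1 t ht) (ε/5) (by linarith)
      obtain ⟨δ2, hδ2, hΨδ⟩ := Metric.continuousWithinAt_iff.mp (hΨc.1 t ht) (ε/5) (by linarith)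
      refine ⟨min δ1 δ2, by positivity, ?_⟩
      intro x hx hdx
      have hxt : t ≤ x := hx
      rw [Real.dist_eq] at hdx
      have hxd : x - t < min δ1 δ2 := by
        rw [abs_of_nonneg (by linarith)] at hdx; exact hdx
      have key : |K t - K x| ≤ 2*(ε/5) + 2*(ε/5) := by
        apply part1 t t x x ht le_rfl hxt le_rfl
        · intro s hs u hu
          have hds : dist s t < δ1 := by
            rw [Real.dist_eq, abs_of_nonneg (by linarith [hs.1])]
            have := hs.2
            have := lt_of_lt_of_le hxd (min_le_left δ1 δ2)
            linarith
          have hdu : dist u t < δ1 := by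
            rw [Real.dist_eq, abs_of_nonneg (by linarith [hu.1])]
            have := hu.2
            have := lt_of_lt_of_le hxd (min_le_left δ1 δ2)
            linarith
          have e1 := hΦδ hs.1 hds
          have e2 := hΦδ hu.1 hdu
          rw [Real.dist_eq] at e1 e2
          have := abs_sub_le (Φ s) (Φ t) (Φ u)
          rw [abs_sub_comm (Φ t) (Φ u)] at this
          linarith
        · intro s hs u hu
          have hds : dist s t < δ2 := by
            rw [Real.dist_eq, abs_of_nonneg (by linarith [hs.1])]
            have := hs.2
            have := lt_of_lt_of_le hxd (min_le_right δ1 δ2)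
            linarith
          have hdu : dist u t < δ2 := by
            rw [Real.dist_eq, abs_of_nonneg (by linarith [hu.1])]
            have := hu.2
            have := lt_of_lt_of_le hxd (min_le_right δ1 δ2)
            linarith
          have e1 := hΨδ hs.1 hds
          have e2 := hΨδ hu.1 hdu
          rw [Real.dist_eq] at e1 e2
          have := abs_sub_le (Ψ s) (Ψ t) (Ψ u)
          rw [abs_sub_comm (Ψ t) (Ψ u)] at this
          linarith
      rw [Real.dist_eq, abs_sub_comm]
      linarith
    · -- left limits
      intro t ht
      obtain ⟨lΦ, hlΦ⟩ := hΦc.2 t ht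
      obtain ⟨lΨ, hlΨ⟩ := hΨc.2 t ht
      have hC : Cauchy (Filter.map K (nhdsWithin t (Set.Iio t))) := by
        rw [Metric.cauchy_iff]
        constructor
        · exact Filter.map_neBot
        · intro ε hε
          have hE1 : ∀ᶠ s in nhdsWithin t (Set.Iio t), dist (Φ s) lΦ < ε/5 :=
            Metric.tendsto_nhds.mp hlΦ (ε/5) (by linarith)
          have hE2 : ∀ᶠ s in nhdsWithin t (Set.Iio t), dist (Ψ s) lΨ < ε/5 :=
            Metric.tendsto_nhds.mp hlΨ (ε/5) (by linarith)
          have hE := hE1.and hE2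
          obtain ⟨a0, ha0, hsub⟩ := mem_nhdsLT_iff_exists_Ioo_subset.mp hE
          have halt : max a0 0 < t := max_lt ha0 ht
          refine ⟨K '' Set.Ioo (max a0 0) t, ?_, ?_⟩
          · exact Filter.image_mem_map
              (mem_nhdsLT_iff_exists_Ioo_subset.mpr ⟨max a0 0, halt, subset_rfl⟩)
          · have main : ∀ u v, u ∈ Set.Ioo (max a0 0) t → v ∈ Set.Ioo (max a0 0) t →
                u ≤ v → dist (K u) (K v) < ε := by
              intro u v hu hv huv
              have hEmem : ∀ s ∈ Set.Icc u v,
                  dist (Φ s) lΦ < ε/5 ∧ dist (Ψ s) lΨ < ε/5 := by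
                intro s hs
                apply hsub
                constructor
                · exact lt_of_le_of_lt (le_max_left a0 0) (lt_of_lt_of_le hu.1 hs.1)
                · exact lt_of_le_of_lt hs.2 hv.2
              have h0u : (0:ℝ) ≤ u := le_of_lt (lt_of_le_of_lt (le_max_right a0 0) hu.1)
              have key : |K u - K v| ≤ 2*(ε/5) + 2*(ε/5) := by
                apply part1 u u v v h0u le_rfl huv le_rfl
                · intro s hs w hw
                  have e1 := (hEmem s hs).1
                  have e2 := (hEmem w hw).1
                  rw [Real.dist_eq] at e1 e2
                  have := abs_sub_le (Φ s) lΦ (Φ w)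
                  rw [abs_sub_comm lΦ (Φ w)] at this
                  linarith
                · intro s hs w hw
                  have e1 := (hEmem s hs).2
                  have e2 := (hEmem w hw).2
                  rw [Real.dist_eq] at e1 e2
                  have := abs_sub_le (Ψ s) lΨ (Ψ w)
                  rw [abs_sub_comm lΨ (Ψ w)] at this
                  linarith
              rw [Real.dist_eq]
              linarith
            rintro x ⟨u, hu, rfl⟩ y ⟨v, hv, rfl⟩
            rcases le_total u v with h' | h'
            · exact main u v hu hv h'
            · rw [dist_comm]
              exact main v u hv hu h'
      obtain ⟨l, hl⟩ := CompleteSpace.complete hC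
      exact ⟨l, hl⟩
  · -- continuity
    intro hΦc hΨc
    intro t ht
    rw [Metric.continuousWithinAt_iff]
    intro ε hε
    obtain ⟨δ1, hδ1, hΦδ⟩ := Metric.continuousWithinAt_iff.mp (hΦc t ht) (ε/5) (by linarith)
    obtain ⟨δ2, hδ2, hΨδ⟩ := Metric.continuousWithinAt_iff.mp (hΨc t ht) (ε/5) (by linarith)
    refine ⟨min δ1 δ2, by positivity, ?_⟩
    intro x hx hdx
    have hx0 : (0:ℝ) ≤ x := hx
    rw [Real.dist_eq] at hdx
    have hd1 : |x - t| < δ1 := lt_of_lt_of_le hdx (min_le_left δ1 δ2)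
    have hd2 : |x - t| < δ2 := lt_of_lt_of_le hdx (min_le_right δ1 δ2)
    have habs1 := abs_lt.mp hd1
    have habs2 := abs_lt.mp hd2
    have oscΦ : ∀ a b : ℝ, (a = t ∧ b = x) ∨ (a = x ∧ b = t) →
        ∀ s ∈ Set.Icc a b, ∀ u ∈ Set.Icc a b, |Φ s - Φ u| ≤ 2*(ε/5) := by
      intro a b hab s hs u hu
      have hrange : ∀ w ∈ Set.Icc a b, (0:ℝ) ≤ w ∧ |w - t| < δ1 := by
        intro w hw
        rcases hab with ⟨rfl, rfl⟩ | ⟨rfl, rfl⟩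
        · exact ⟨le_trans ht hw.1, by rw [abs_lt]; constructor <;> nlinarith [hw.1, hw.2, habs1.1, habs1.2]⟩
        · exact ⟨le_trans hx0 hw.1, by rw [abs_lt]; constructor <;> nlinarith [hw.1, hw.2, habs1.1, habs1.2]⟩
      obtain ⟨hs0, hsd⟩ := hrange s hs
      obtain ⟨hu0, hud⟩ := hrange u hu
      have e1 := hΦδ hs0 (by rw [Real.dist_eq]; exact hsd)
      have e2 := hΦδ hu0 (by rw [Real.dist_eq]; exact hud)
      rw [Real.dist_eq] at e1 e2
      have := abs_sub_le (Φ s) (Φ t) (Φ u)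
      rw [abs_sub_comm (Φ t) (Φ u)] at this
      linarith
    have oscΨ : ∀ a b : ℝ, (a = t ∧ b = x) ∨ (a = x ∧ b = t) →
        ∀ s ∈ Set.Icc a b, ∀ u ∈ Set.Icc a b, |Ψ s - Ψ u| ≤ 2*(ε/5) := by
      intro a b hab s hs u hu
      have hrange : ∀ w ∈ Set.Icc a b, (0:ℝ) ≤ w ∧ |w - t| < δ2 := by
        intro w hw
        rcases hab with ⟨rfl, rfl⟩ | ⟨rfl, rfl⟩
        · exact ⟨le_trans ht hw.1, by rw [abs_lt]; constructor <;> nlinarith [hw.1, hw.2, habs2.1, habs2.2]⟩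
        · exact ⟨le_trans hx0 hw.1, by rw [abs_lt]; constructor <;> nlinarith [hw.1, hw.2, habs2.1, habs2.2]⟩
      obtain ⟨hs0, hsd⟩ := hrange s hs
      obtain ⟨hu0, hud⟩ := hrange u hu
      have e1 := hΨδ hs0 (by rw [Real.dist_eq]; exact hsd)
      have e2 := hΨδ hu0 (by rw [Real.dist_eq]; exact hud)
      rw [Real.dist_eq] at e1 e2
      have := abs_sub_le (Ψ s) (Ψ t) (Ψ u)
      rw [abs_sub_comm (Ψ t) (Ψ u)] at this
      linarith
    rcases le_total t x with h | h
    · have key := part1 t t x x ht le_rfl h le_rfl (2*(ε/5)) (2*(ε/5))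
        (oscΦ t x (Or.inl ⟨rfl, rfl⟩)) (oscΨ t x (Or.inl ⟨rfl, rfl⟩))
      rw [Real.dist_eq, abs_sub_comm]
      linarith
    · have key := part1 x x t t hx0 le_rfl h le_rfl (2*(ε/5)) (2*(ε/5))
        (oscΦ x t (Or.inr ⟨rfl, rfl⟩)) (oscΨ x t (Or.inr ⟨rfl, rfl⟩))
      rw [Real.dist_eq]
      linarith
end

section
/- Let Φ, Ψ : [0,∞) → ℝ be càdlàg with a := inf_{t≥0}(Φ_t − Ψ_t) > 0, and define recursively crossing times σ_k, τ_k by τ_0 = 0, σ_0 = inf{t>0 : Φ_t ≤ 0}, τ_k = min{t > σ_{k−1} : inf_{s∈[σ_{k−1},t]} Φ_s ≤ Ψ_t} and σ_k = min{t > τ_k : sup_{s∈[τ_k,t]} Ψ_s ≥ Φ_t} for k ≥ 1 (assuming σ_0 < τ* where τ* = inf{t>0 : Ψ_t ≥ 0}). Then lim_{k→∞} τ_k = lim_{k→∞} σ_k = ∞. -/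
open Filter

theorem crossing_times_tendsto_atTop
    (Φ Ψ : ℝ → ℝ) (a : ℝ) (ha : 0 < a)
    (hΦ : Cadlag Φ) (hΨ : Cadlag Ψ)
    (hgap : ∀ t : ℝ, 0 ≤ t → a ≤ Φ t - Ψ t)
    (τ σ : ℕ → ℝ)
    (hτ0 : τ 0 = 0)
    (hσ0 : IsLeast {t : ℝ | 0 < t ∧ Φ t ≤ 0} (σ 0))
    (hbefore : ∀ t : ℝ, 0 < t → t ≤ σ 0 → Ψ t < 0)
    (hτ : ∀ k : ℕ,
      IsLeast {t : ℝ | σ k < t ∧ sInf (Φ '' Set.Icc (σ k) t) ≤ Ψ t} (τ (k + 1)))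
    (hσ : ∀ k : ℕ,
      IsLeast {t : ℝ | τ (k + 1) < t ∧ Φ t ≤ sSup (Ψ '' Set.Icc (τ (k + 1)) t)}
        (σ (k + 1))) :
    Tendsto τ atTop atTop ∧ Tendsto σ atTop atTop := by
  have hστ : ∀ k : ℕ, σ k < τ (k + 1) := fun k => (hτ k).1.1
  have hτσ : ∀ k : ℕ, τ (k + 1) < σ (k + 1) := fun k => (hσ k).1.1
  have σmono : StrictMono σ :=
    strictMono_nat_of_lt_succ fun k => (hστ k).trans (hτσ k)
  have σpos : ∀ k : ℕ, 0 < σ k := fun k =>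
    lt_of_lt_of_le hσ0.1.1 (σmono.monotone (Nat.zero_le k))
  have hσtop : Tendsto σ atTop atTop := by
    rcases tendsto_of_monotone σmono.monotone with h | ⟨L, hL⟩
    · exact h
    exfalso
    have hkL : ∀ k : ℕ, σ k < L := fun k =>
      lt_of_lt_of_le (σmono (Nat.lt_succ_self k))
        (σmono.monotone.ge_of_tendsto hL (k + 1))
    have hL0 : 0 < L := (σpos 0).trans (hkL 0)
    obtain ⟨l, hl⟩ := hΨ.2 L hL0
    -- extract oscillation points
    have H : ∀ k : ℕ, ∃ s : ℝ, s ∈ Set.Icc (τ (k + 1)) (σ (k + 1)) ∧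
        Ψ (σ (k + 1)) + a / 2 < Ψ s := by
      intro k
      have h1 : Φ (σ (k + 1)) ≤ sSup (Ψ '' Set.Icc (τ (k + 1)) (σ (k + 1))) :=
        (hσ k).1.2
      have h2 : a ≤ Φ (σ (k + 1)) - Ψ (σ (k + 1)) := hgap _ (σpos (k + 1)).le
      have hne : (Ψ '' Set.Icc (τ (k + 1)) (σ (k + 1))).Nonempty :=
        ⟨Ψ (τ (k + 1)), Set.mem_image_of_mem _ ⟨le_refl _, (hτσ k).le⟩⟩
      have h3 : Ψ (σ (k + 1)) + a / 2 < sSup (Ψ '' Set.Icc (τ (k + 1)) (σ (k + 1))) := by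
        linarith
      obtain ⟨y, ⟨s, hs, rfl⟩, hy⟩ := exists_lt_of_lt_csSup hne h3
      exact ⟨s, hs, hy⟩
    choose s hs1 hs2 using H
    -- σ (k+1) tends to L from the left
    have hσ1L : Tendsto (fun k => σ (k + 1)) atTop (nhds L) :=
      (tendsto_add_atTop_iff_nat 1).mpr hL
    have hsL : Tendsto s atTop (nhds L) := by
      refine tendsto_of_tendsto_of_tendsto_of_le_of_le hL hσ1L
        (fun k => le_trans (hστ k).le (hs1 k).1) (fun k => (hs1 k).2)
    have hsL' : Tendsto s atTop (nhdsWithin L (Set.Iio L)) := by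
      refine tendsto_nhdsWithin_of_tendsto_nhds_of_eventually_within _ hsL
        (Eventually.of_forall fun k => ?_)
      exact lt_of_le_of_lt (hs1 k).2 (hkL (k + 1))
    have hσ1L' : Tendsto (fun k => σ (k + 1)) atTop (nhdsWithin L (Set.Iio L)) :=
      tendsto_nhdsWithin_of_tendsto_nhds_of_eventually_within _ hσ1L
        (Eventually.of_forall fun k => hkL (k + 1))
    have hA : Tendsto (fun k => Ψ (s k)) atTop (nhds l) := hl.comp hsL'
    have hB : Tendsto (fun k => Ψ (σ (k + 1)) + a / 2) atTop (nhds (l + a / 2)) :=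
      ((hl.comp hσ1L').add tendsto_const_nhds)
    have : l + a / 2 ≤ l := le_of_tendsto_of_tendsto' hB hA fun k => (hs2 k).le
    linarith
  refine ⟨?_, hσtop⟩
  have hτtop : Tendsto (fun k => τ (k + 1)) atTop atTop :=
    tendsto_atTop_mono (fun k => (hστ k).le) hσtop
  exact (tendsto_add_atTop_iff_nat 1).mp hτtop
end

section
/- Let R : [0,∞) × ℝ → ℝ satisfy: R(·,x) is càdlàg for fixed x, R(t,·) is strictly increasing, and c|x−y| ≤ |R(t,x)−R(t,y)| ≤ C|x−y| for constants 0 < c < C. Given real c_0^1, c_0^2 and S^1, S^2 càdlàg with S^1_0 = S^2_0 = 0 and S^2 ≤ S^1 ≤ S^2 + ν for a nonnegative nondecreasing càdlàg ν, let Ψ^i_s solve R(s, c_0^i + S^i_s + Ψ^i_s) = 0 and K^i_t = sup_{s∈[0,t]} (Ψ^i_s)⁺. Then for all t ≥ 0: K^1_t − (c_0^2 − c_0^1)⁺ ≤ K^2_t ≤ K^1_t + ν_t + (c_0^1 − c_0^2)⁺. -/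
open Filter

lemma sSup_image_le_aux (I : Set ℝ) (hI : I.Nonempty) (f g : ℝ → ℝ) (d e : ℝ)
    (hd : 0 ≤ d) (h : ∀ s ∈ I, f s ≤ g s + d) (h' : ∀ s ∈ I, g s ≤ f s + e) :
    sSup (f '' I) ≤ sSup (g '' I) + d := by
  by_cases hB : BddAbove (g '' I)
  · apply csSup_le (hI.image f)
    rintro y ⟨s, hs, rfl⟩
    exact le_trans (h s hs) (add_le_add (le_csSup hB ⟨s, hs, rfl⟩) le_rfl)
  · have hA : ¬ BddAbove (f '' I) := by
      intro ⟨M, hM⟩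
      apply hB
      refine ⟨M + e, ?_⟩
      rintro y ⟨s, hs, rfl⟩
      exact le_trans (h' s hs) (add_le_add (hM ⟨s, hs, rfl⟩) le_rfl)
    rw [Real.sSup_of_not_bddAbove hA, Real.sSup_of_not_bddAbove hB]
    linarith

theorem one_sided_comparison
    (R : ℝ → ℝ → ℝ) (c C : ℝ) (hc : 0 < c) (hcC : c < C)
    (hRcadlag : ∀ x : ℝ, Cadlag (fun t => R t x))
    (hmono : ∀ t : ℝ, 0 ≤ t → StrictMono (R t))
    (hlip : ∀ t : ℝ, 0 ≤ t → ∀ x y : ℝ,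
      c * |x - y| ≤ |R t x - R t y| ∧ |R t x - R t y| ≤ C * |x - y|)
    (c1 c2 : ℝ) (S1 S2 ν Ψ1 Ψ2 : ℝ → ℝ)
    (hS1 : Cadlag S1) (hS2 : Cadlag S2) (hν : Cadlag ν)
    (hS10 : S1 0 = 0) (hS20 : S2 0 = 0)
    (hνpos : ∀ t : ℝ, 0 ≤ t → 0 ≤ ν t)
    (hνmono : ∀ s t : ℝ, 0 ≤ s → s ≤ t → ν s ≤ ν t)
    (horder : ∀ t : ℝ, 0 ≤ t → S2 t ≤ S1 t ∧ S1 t ≤ S2 t + ν t)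
    (hΨ1 : ∀ s : ℝ, 0 ≤ s → R s (c1 + S1 s + Ψ1 s) = 0)
    (hΨ2 : ∀ s : ℝ, 0 ≤ s → R s (c2 + S2 s + Ψ2 s) = 0) :
    ∀ t : ℝ, 0 ≤ t →
      sSup ((fun s => max (Ψ1 s) 0) '' Set.Icc 0 t) - max (c2 - c1) 0 ≤
        sSup ((fun s => max (Ψ2 s) 0) '' Set.Icc 0 t) ∧
      sSup ((fun s => max (Ψ2 s) 0) '' Set.Icc 0 t) ≤
        sSup ((fun s => max (Ψ1 s) 0) '' Set.Icc 0 t) + ν t + max (c1 - c2) 0 := by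
  intro t ht
  have hIne : (Set.Icc (0:ℝ) t).Nonempty := ⟨0, le_refl 0, ht⟩
  -- key pointwise identity
  have key : ∀ s ∈ Set.Icc (0:ℝ) t, c1 + S1 s + Ψ1 s = c2 + S2 s + Ψ2 s := by
    rintro s ⟨hs0, _⟩
    exact (hmono s hs0).injective ((hΨ1 s hs0).trans (hΨ2 s hs0).symm)
  have hpt1 : ∀ s ∈ Set.Icc (0:ℝ) t,
      max (Ψ1 s) 0 ≤ max (Ψ2 s) 0 + max (c2 - c1) 0 := by
    rintro s hs
    have hk := key s hs
    have hS := (horder s hs.1).1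
    have : Ψ1 s ≤ Ψ2 s + max (c2 - c1) 0 := by
      have : Ψ1 s ≤ Ψ2 s + (c2 - c1) := by linarith
      exact this.trans (by gcongr; exact le_max_left _ _)
    refine max_le (this.trans (by gcongr; exact le_max_left _ _)) ?_
    have := le_max_right (Ψ2 s) 0
    have := le_max_right (c2 - c1) 0
    linarith
  have hpt2 : ∀ s ∈ Set.Icc (0:ℝ) t,
      max (Ψ2 s) 0 ≤ max (Ψ1 s) 0 + (ν t + max (c1 - c2) 0) := by
    rintro s hs
    have hk := key s hs
    have hS := (horder s hs.1).2
    have hν' : ν s ≤ ν t := hνmono s t hs.1 hs.2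
    have h1 : Ψ2 s ≤ Ψ1 s + (ν t + max (c1 - c2) 0) := by
      have := le_max_left (c1 - c2) 0
      linarith
    refine max_le (h1.trans (by gcongr; exact le_max_left _ _)) ?_
    have := le_max_right (Ψ1 s) 0
    have := le_max_right (c1 - c2) 0
    have := hνpos t ht
    linarith
  constructor
  · have := sSup_image_le_aux (Set.Icc 0 t) hIne (fun s => max (Ψ1 s) 0)
      (fun s => max (Ψ2 s) 0) (max (c2 - c1) 0) (ν t + max (c1 - c2) 0)
      (le_max_right _ _) hpt1 hpt2
    linarith
  · have := sSup_image_le_aux (Set.Icc 0 t) hIne (fun s => max (Ψ2 s) 0)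
      (fun s => max (Ψ1 s) 0) (ν t + max (c1 - c2) 0) (max (c2 - c1) 0)
      (by have := hνpos t ht; have := le_max_right (c1 - c2) 0; linarith) hpt2 hpt1
    linarith
end

section
/- Suppose L, R satisfy: L(·,x), R(·,x) càdlàg, L(t,·), R(t,·) strictly increasing, and inf_{t,x}(R(t,x) − L(t,x)) > 0. Given S càdlàg, if (X, K) and (X', K') are both solutions of the Skorokhod problem for S with constraints L, R (i.e., X = S + K, L(t,X_t) ≤ 0 ≤ R(t,X_t), K_{0−} = 0, K = K^r − K^l with K^r, K^l nondecreasing, ∫₀^∞ 1_{L(s,X_s)<0} dK^l_s = 0 and ∫₀^∞ 1_{R(s,X_s)>0} dK^r_s = 0, and similarly for (X',K')), then X = X' and K = K'. -/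
open Filter MeasureTheory

/-- `(X, Kr - Kl)` solves the Skorokhod problem for `S` with nonlinear
constraints `L, R`.  The nondecreasing right-continuous functions `Kr, Kl`
are extended by `0` on `(-∞, 0)` (so `K_{0-} = 0`), and the flat-off
conditions are expressed via their Stieltjes measures. -/
structure SkorokhodSolution (L R : ℝ → ℝ → ℝ) (S X : ℝ → ℝ)
    (Kr Kl : StieltjesFunction ℝ) : Prop where
  add : ∀ t : ℝ, 0 ≤ t → X t = S t + (Kr t - Kl t)
  constraintL : ∀ t : ℝ, 0 ≤ t → L t (X t) ≤ 0
  constraintR : ∀ t : ℝ, 0 ≤ t → 0 ≤ R t (X t)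
  initR : ∀ t : ℝ, t < 0 → Kr t = 0
  initL : ∀ t : ℝ, t < 0 → Kl t = 0
  flatL : Kl.measure {s : ℝ | 0 ≤ s ∧ L s (X s) < 0} = 0
  flatR : Kr.measure {s : ℝ | 0 ≤ s ∧ 0 < R s (X s)} = 0

/-!
Write `K = Kʳ - Kˡ` and `K' = Kʳ' - Kˡ'`. To get `K ≤ K'` compare the Stieltjes functions
`P = Kʳ + Kˡ'` and `N = Kˡ + Kʳ'`, whose difference is `K - K'`. Wherever `K > K'` we have
`X > X'`, so by strict monotonicity `R(·, X) > R(·, X') ≥ 0` and `L(·, X') < L(·, X) ≤ 0`: the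
flat-off conditions say that neither `Kʳ` nor `Kˡ'` charges that set, i.e. `P` does not grow
while `P > N`. Since `P = N = 0` before time `0`, a look at the last time before `t` at which
`P ≤ N` shows that `P ≤ N` everywhere. Symmetry gives `K = K'`, and then `X = S + K = X'`.
-/

open Set

namespace StieltjesFunction

variable {R : Type*} [LinearOrder R] [TopologicalSpace R] [OrderTopology R] [CompactIccSpace R]
  [MeasurableSpace R] [BorelSpace R] [SecondCountableTopology R] [DenselyOrdered R]
  (f : StieltjesFunction R)

theorem le_of_measure_Ioc_eq_zero {a b : R} (h : f.measure (Ioc a b) = 0) : f b ≤ f a := by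
  rwa [f.measure_Ioc, ENNReal.ofReal_eq_zero, sub_nonpos] at h

theorem le_leftLim_of_measure_singleton_eq_zero {a : R} (h : f.measure {a} = 0) :
    f a ≤ Function.leftLim f a := by
  rwa [f.measure_singleton, ENNReal.ofReal_eq_zero, sub_nonpos] at h

theorem le_of_measure_setOf_lt_eq_zero (P N : StieltjesFunction ℝ)
    (hbot : ∀ᶠ u in Filter.atBot, P u ≤ N u) (hflat : P.measure {u | N u < P u} = 0) (t : ℝ) :
    P t ≤ N t := by
  by_contra! ht
  set A := {u | u ≤ t ∧ P u ≤ N u}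
  have hAne : A.Nonempty := by
    obtain ⟨u₀, hu₀⟩ := Filter.eventually_atBot.1 hbot
    exact ⟨min u₀ t, min_le_right _ _, hu₀ _ (min_le_left _ _)⟩
  have hlub : IsLUB A (sSup A) := isLUB_csSup hAne ⟨t, fun u hu => hu.1⟩
  set σ := sSup A
  have hσt : σ ≤ t := hlub.2 fun u hu => hu.1
  have hgt : Ioc σ t ⊆ {u | N u < P u} := fun u hu => by
    by_contra! h
    exact hu.1.not_ge (hlub.1 ⟨hu.2, not_lt.1 h⟩)
  have hσ : P σ ≤ N σ := by
    by_contra! hσ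
    have hjump : P σ ≤ Function.leftLim P σ :=
      P.le_leftLim_of_measure_singleton_eq_zero
        (measure_mono_null (singleton_subset_iff.2 hσ) hflat)
    -- `σ ∉ A`, so `A` accumulates at `σ` from the left
    have hfreq : ∃ᶠ u in nhdsWithin σ (Iio σ), P u - N u ≤ 0 := by
      refine frequently_nhdsWithin_iff.2
        ((frequently_nhdsWithin_iff.1 (hlub.frequently_mem hAne)).mono ?_)
      rintro u ⟨huA, huσ⟩
      refine ⟨sub_nonpos.2 huA.2, mem_Iio.2 (huσ.lt_of_ne ?_)⟩
      rintro rfl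
      exact hσ.not_ge huA.2
    have hlim : Function.leftLim P σ - Function.leftLim N σ ≤ 0 :=
      le_of_tendsto_of_frequently ((P.mono.tendsto_leftLim σ).sub (N.mono.tendsto_leftLim σ)) hfreq
    linarith [N.mono.leftLim_le (le_refl σ)]
  linarith [P.le_of_measure_Ioc_eq_zero (measure_mono_null hgt hflat), N.mono hσt]

end StieltjesFunction

namespace SkorokhodSolution

variable {L R : ℝ → ℝ → ℝ} {S X X' : ℝ → ℝ} {Kr Kl Kr' Kl' : StieltjesFunction ℝ}

theorem sub_eq_zero_of_neg (hsol : SkorokhodSolution L R S X Kr Kl) {u : ℝ} (hu : u < 0) :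
    Kr u - Kl u = 0 := by
  rw [hsol.initR u hu, hsol.initL u hu, sub_zero]

theorem nonneg_and_lt_of_sub_lt_sub (hsol : SkorokhodSolution L R S X Kr Kl)
    (hsol' : SkorokhodSolution L R S X' Kr' Kl') {u : ℝ}
    (hu : Kr' u - Kl' u < Kr u - Kl u) : 0 ≤ u ∧ X' u < X u := by
  have hu₀ : 0 ≤ u := by
    by_contra! hneg
    rw [hsol.sub_eq_zero_of_neg hneg, hsol'.sub_eq_zero_of_neg hneg] at hu
    exact hu.false
  refine ⟨hu₀, ?_⟩
  rw [hsol.add u hu₀, hsol'.add u hu₀]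
  linarith

theorem sub_le_sub (hmonoL : ∀ t : ℝ, 0 ≤ t → StrictMono (L t))
    (hmonoR : ∀ t : ℝ, 0 ≤ t → StrictMono (R t))
    (hsol : SkorokhodSolution L R S X Kr Kl) (hsol' : SkorokhodSolution L R S X' Kr' Kl')
    (t : ℝ) : Kr t - Kl t ≤ Kr' t - Kl' t := by
  have hexcess (u : ℝ) (hu : (Kl + Kr') u < (Kr + Kl') u) : 0 ≤ u ∧ X' u < X u := by
    simp only [StieltjesFunction.add_apply] at hu
    exact hsol.nonneg_and_lt_of_sub_lt_sub hsol' (by linarith)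
  have hcmp := (Kr + Kl').le_of_measure_setOf_lt_eq_zero (Kl + Kr') ?_ ?_ t
  · simp only [StieltjesFunction.add_apply] at hcmp
    linarith
  · refine Filter.eventually_atBot.2 ⟨-1, fun u hu => ?_⟩
    have hneg : u < 0 := by linarith
    simp only [StieltjesFunction.add_apply]
    linarith [hsol.sub_eq_zero_of_neg hneg, hsol'.sub_eq_zero_of_neg hneg]
  · rw [StieltjesFunction.measure_add, Measure.add_apply]
    refine add_eq_zero.2 ⟨measure_mono_null (fun u hu => ?_) hsol.flatR,
      measure_mono_null (fun u hu => ?_) hsol'.flatL⟩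
    all_goals obtain ⟨hu₀, hX⟩ := hexcess u hu
    · exact ⟨hu₀, (hsol'.constraintR u hu₀).trans_lt (hmonoR u hu₀ hX)⟩
    · exact ⟨hu₀, (hmonoL u hu₀ hX).trans_le (hsol.constraintL u hu₀)⟩

end SkorokhodSolution

theorem skorokhod_problem_uniqueness_general
    (L R : ℝ → ℝ → ℝ)
    (hmonoL : ∀ t : ℝ, 0 ≤ t → StrictMono (L t))
    (hmonoR : ∀ t : ℝ, 0 ≤ t → StrictMono (R t))
    (S X X' : ℝ → ℝ) (Kr Kl Kr' Kl' : StieltjesFunction ℝ)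
    (hsol : SkorokhodSolution L R S X Kr Kl)
    (hsol' : SkorokhodSolution L R S X' Kr' Kl') :
    ∀ t : ℝ, 0 ≤ t → X t = X' t ∧ Kr t - Kl t = Kr' t - Kl' t := by
  intro t ht
  have hK : Kr t - Kl t = Kr' t - Kl' t :=
    (hsol.sub_le_sub hmonoL hmonoR hsol' t).antisymm (hsol'.sub_le_sub hmonoL hmonoR hsol t)
  exact ⟨by rw [hsol.add t ht, hsol'.add t ht, hK], hK⟩

theorem skorokhod_problem_uniqueness
    (L R : ℝ → ℝ → ℝ)
    (hLcadlag : ∀ x : ℝ, Cadlag (fun t => L t x))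
    (hRcadlag : ∀ x : ℝ, Cadlag (fun t => R t x))
    (hmonoL : ∀ t : ℝ, 0 ≤ t → StrictMono (L t))
    (hmonoR : ∀ t : ℝ, 0 ≤ t → StrictMono (R t))
    (hgap : ∃ α : ℝ, 0 < α ∧ ∀ t : ℝ, 0 ≤ t → ∀ x : ℝ, α ≤ R t x - L t x)
    (S X X' : ℝ → ℝ) (Kr Kl Kr' Kl' : StieltjesFunction ℝ)
    (hS : Cadlag S)
    (hsol : SkorokhodSolution L R S X Kr Kl)
    (hsol' : SkorokhodSolution L R S X' Kr' Kl') :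
    ∀ t : ℝ, 0 ≤ t → X t = X' t ∧ Kr t - Kl t = Kr' t - Kl' t :=
  skorokhod_problem_uniqueness_general L R hmonoL hmonoR S X X' Kr Kl Kr' Kl' hsol hsol'
end
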